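/- arXiv:2506.17464 — 2 statements merged into one kernel-verified Lean document; each statement's English description precedes it below -/
import Mathlib

section
/- Let a, b, K_C, K_N, r_max, e be positive real constants. Suppose C, N, P, D : [0, T] → ℝ are differentiable, with K_C + C(t) > 0 and K_N + N(t) > 0 for all t ∈ [0, T], and satisfy C' = −a·r_max·(C/(K_C+C))·(N/(K_N+N))·P, N' = −b·r_max·(C/(K_C+C))·(N/(K_N+N))·P, P' = r_max·(C/(K_C+C))·(N/(K_N+N))·P − eP, D' = eP on [0, T]. If C(0) ≥ 0, N(0) ≥ 0, P(0) ≥ 0 and D(0) ≥ 0, then C(t) ≥ 0, N(t) ≥ 0, P(t) ≥ 0 and D(t) ≥ 0 for all t ∈ [0, T]. -/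
open Set

/-- Nonnegativity for a scalar linear ODE `x' = φ t * x` on `[0, T]`. -/
lemma nonneg_of_linear_ode {T : ℝ} {x φ : ℝ → ℝ}
    (hx : ∀ t ∈ Set.Icc (0 : ℝ) T, HasDerivWithinAt x (φ t * x t) (Set.Icc 0 T) t)
    (hφ : ContinuousOn φ (Set.Icc 0 T))
    (hx0 : 0 ≤ x 0) : ∀ t ∈ Set.Icc (0 : ℝ) T, 0 ≤ x t := by
  intro t1 ht1
  by_contra hneg
  push_neg at hneg
  have hxc : ContinuousOn x (Set.Icc 0 T) := fun t ht => (hx t ht).continuousWithinAt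
  have hsub : Set.Icc (0 : ℝ) t1 ⊆ Set.Icc 0 T :=
    Set.Icc_subset_Icc le_rfl ht1.2
  -- find a zero of x in [0, t1]
  obtain ⟨t0, ht0, hxt0⟩ : ∃ t0 ∈ Set.Icc (0 : ℝ) t1, x t0 = 0 := by
    have := intermediate_value_Icc' ht1.1 (hxc.mono hsub)
    have h0 : (0 : ℝ) ∈ Set.Icc (x t1) (x 0) := ⟨le_of_lt hneg, hx0⟩
    obtain ⟨t0, ht0, h⟩ := this h0
    exact ⟨t0, ht0, h⟩
  -- bound φ on the compact interval
  obtain ⟨M, hM⟩ := (isCompact_Icc (a := (0:ℝ)) (b := T)).exists_bound_of_continuousOn hφ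
  have hsub01 : Set.Icc t0 t1 ⊆ Set.Icc 0 T :=
    Set.Icc_subset_Icc ht0.1 ht1.2
  have key := norm_le_gronwallBound_of_norm_deriv_right_le
    (f := x) (f' := fun t => φ t * x t) (δ := 0) (K := M) (ε := 0) (a := t0) (b := t1)
    (hxc.mono hsub01)
    (fun t ht => by
      have htT : t ∈ Set.Icc (0 : ℝ) T := hsub01 ⟨ht.1, le_of_lt ht.2⟩
      have hlt : t < T := lt_of_lt_of_le ht.2 ht1.2
      exact (hx t htT).mono_of_mem_nhdsWithin
        (Icc_mem_nhdsGE_of_mem ⟨htT.1, hlt⟩))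
    (by simp [hxt0])
    (fun t ht => by
      have htT : t ∈ Set.Icc (0 : ℝ) T := hsub01 ⟨ht.1, le_of_lt ht.2⟩
      have := hM t htT
      calc ‖φ t * x t‖ = ‖φ t‖ * ‖x t‖ := norm_mul _ _
        _ ≤ M * ‖x t‖ + 0 := by
            rw [add_zero]
            exact mul_le_mul_of_nonneg_right this (norm_nonneg _))
  have := key t1 ⟨ht0.2, le_rfl⟩
  rw [gronwallBound_ε0_δ0] at this
  have hx1 : x t1 = 0 := norm_le_zero_iff.mp this
  linarith

/-- Nonnegativity of the phytoplankton model: with positive constants and positive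
denominators, solutions with nonnegative initial data remain nonnegative on `[0, T]`. -/
theorem phytoplankton_nonnegativity
    (a b K_C K_N r_max e T : ℝ)
    (ha : 0 < a) (hb : 0 < b) (hKC : 0 < K_C) (hKN : 0 < K_N)
    (hr : 0 < r_max) (he : 0 < e)
    (C N P D : ℝ → ℝ)
    (hC_dom : ∀ t ∈ Set.Icc (0 : ℝ) T, 0 < K_C + C t)
    (hN_dom : ∀ t ∈ Set.Icc (0 : ℝ) T, 0 < K_N + N t)
    (hC : ∀ t ∈ Set.Icc (0 : ℝ) T,
      HasDerivWithinAt C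
        (-(a * r_max * (C t / (K_C + C t)) * (N t / (K_N + N t)) * P t))
        (Set.Icc 0 T) t)
    (hN : ∀ t ∈ Set.Icc (0 : ℝ) T,
      HasDerivWithinAt N
        (-(b * r_max * (C t / (K_C + C t)) * (N t / (K_N + N t)) * P t))
        (Set.Icc 0 T) t)
    (hP : ∀ t ∈ Set.Icc (0 : ℝ) T,
      HasDerivWithinAt P
        (r_max * (C t / (K_C + C t)) * (N t / (K_N + N t)) * P t - e * P t)
        (Set.Icc 0 T) t)
    (hD : ∀ t ∈ Set.Icc (0 : ℝ) T,
      HasDerivWithinAt D (e * P t) (Set.Icc 0 T) t)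
    (hC0 : 0 ≤ C 0) (hN0 : 0 ≤ N 0) (hP0 : 0 ≤ P 0) (hD0 : 0 ≤ D 0) :
    ∀ t ∈ Set.Icc (0 : ℝ) T, 0 ≤ C t ∧ 0 ≤ N t ∧ 0 ≤ P t ∧ 0 ≤ D t := by
  have hCc : ContinuousOn C (Set.Icc 0 T) := fun t ht => (hC t ht).continuousWithinAt
  have hNc : ContinuousOn N (Set.Icc 0 T) := fun t ht => (hN t ht).continuousWithinAt
  have hPc : ContinuousOn P (Set.Icc 0 T) := fun t ht => (hP t ht).continuousWithinAt
  have hDc : ContinuousOn D (Set.Icc 0 T) := fun t ht => (hD t ht).continuousWithinAt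
  have hCd : ∀ t ∈ Set.Icc (0:ℝ) T, K_C + C t ≠ 0 := fun t ht => ne_of_gt (hC_dom t ht)
  have hNd : ∀ t ∈ Set.Icc (0:ℝ) T, K_N + N t ≠ 0 := fun t ht => ne_of_gt (hN_dom t ht)
  have hKCc : ContinuousOn (fun t => K_C + C t) (Set.Icc 0 T) := continuousOn_const.add hCc
  have hKNc : ContinuousOn (fun t => K_N + N t) (Set.Icc 0 T) := continuousOn_const.add hNc
  -- P ≥ 0
  have hPnn : ∀ t ∈ Set.Icc (0:ℝ) T, 0 ≤ P t := by
    apply nonneg_of_linear_ode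
      (φ := fun t => r_max * (C t / (K_C + C t)) * (N t / (K_N + N t)) - e)
    · intro t ht
      have := hP t ht
      have heq : r_max * (C t / (K_C + C t)) * (N t / (K_N + N t)) * P t - e * P t
          = (r_max * (C t / (K_C + C t)) * (N t / (K_N + N t)) - e) * P t := by ring
      rwa [heq] at this
    · exact (((continuousOn_const.mul (hCc.div hKCc hCd)).mul
        (hNc.div hKNc hNd)).sub continuousOn_const)
    · exact hP0
  -- C ≥ 0
  have hCnn : ∀ t ∈ Set.Icc (0:ℝ) T, 0 ≤ C t := by
    apply nonneg_of_linear_ode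
      (φ := fun t => -(a * r_max * (1 / (K_C + C t)) * (N t / (K_N + N t)) * P t))
    · intro t ht
      have := hC t ht
      have heq : -(a * r_max * (C t / (K_C + C t)) * (N t / (K_N + N t)) * P t)
          = -(a * r_max * (1 / (K_C + C t)) * (N t / (K_N + N t)) * P t) * C t := by
        field_simp
      rwa [heq] at this
    · exact ((((continuousOn_const.mul
        (continuousOn_const.div hKCc hCd)).mul
        (hNc.div hKNc hNd)).mul hPc)).neg
    · exact hC0
  -- N ≥ 0
  have hNnn : ∀ t ∈ Set.Icc (0:ℝ) T, 0 ≤ N t := by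
    apply nonneg_of_linear_ode
      (φ := fun t => -(b * r_max * (C t / (K_C + C t)) * (1 / (K_N + N t)) * P t))
    · intro t ht
      have := hN t ht
      have heq : -(b * r_max * (C t / (K_C + C t)) * (N t / (K_N + N t)) * P t)
          = -(b * r_max * (C t / (K_C + C t)) * (1 / (K_N + N t)) * P t) * N t := by
        field_simp
      rwa [heq] at this
    · exact ((((continuousOn_const.mul
        (hCc.div hKCc hCd)).mul
        (continuousOn_const.div hKNc hNd)).mul hPc)).neg
    · exact hN0
  -- D monotone hence ≥ D 0 ≥ 0
  have hDmono : MonotoneOn D (Set.Icc 0 T) := by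
    apply monotoneOn_of_deriv_nonneg (convex_Icc 0 T) hDc
    · intro t ht
      rw [interior_Icc] at ht
      exact ((hD t ⟨le_of_lt ht.1, le_of_lt ht.2⟩).hasDerivAt
        (Icc_mem_nhds ht.1 ht.2)).differentiableAt.differentiableWithinAt
    · intro t ht
      rw [interior_Icc] at ht
      have htI : t ∈ Set.Icc (0:ℝ) T := ⟨le_of_lt ht.1, le_of_lt ht.2⟩
      have hd := ((hD t htI).hasDerivAt (Icc_mem_nhds ht.1 ht.2)).deriv
      rw [hd]
      exact mul_nonneg (le_of_lt he) (hPnn t htI)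
  intro t ht
  refine ⟨hCnn t ht, hNnn t ht, hPnn t ht, ?_⟩
  have h0 : (0:ℝ) ∈ Set.Icc (0:ℝ) T := ⟨le_rfl, le_trans ht.1 ht.2⟩
  exact le_trans hD0 (hDmono h0 ht ht.1)
end

section
/- Let s ≥ 1, let c_1 < c_2 < ⋯ < c_s be distinct real numbers, and let ℓ_1, …, ℓ_s be the Lagrange basis polynomials of degree s−1 for these nodes. Let d ≥ 1, f : ℝ^d → ℝ^d, t_n ∈ ℝ, k > 0, y^n ∈ ℝ^d, and let u : ℝ → ℝ^d be a polynomial (componentwise) of degree at most s with u(t_n) = y^n and u'(t_n + c_i k) = f(u(t_n + c_i k)) for i = 1, …, s. Define A_{ij} = ∫_0^{c_i} ℓ_j(τ) dτ and Y_i = u(t_n + c_i k). Then Y_i = y^n + k·∑_{j=1}^{s} A_{ij} f(Y_j) for every i = 1, …, s. -/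
/-!
On `[tₙ, tₙ + k]` the derivative `τ ↦ u'(tₙ + τk)` of a polynomial of degree at most `s` is a
polynomial of degree at most `s - 1`, so it equals its Lagrange interpolant at the `s` nodes
`cᵢ`, where the collocation conditions give the values `f(Yⱼ)`. Integrating this interpolant
from `0` to `cᵢ` (fundamental theorem of calculus) yields the stage equation
`Yᵢ = yⁿ + k ∑ⱼ Aᵢⱼ f(Yⱼ)`, one component at a time.
-/

open Polynomial Finset

theorem Polynomial.eval_eq_sum_eval_mul_lagrange {F ι : Type*} [Field F] [Fintype ι]
    [DecidableEq ι] {v : ι → F} (hv : Function.Injective v) {p : F[X]}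
    (hp : p.degree < Fintype.card ι) (x : F) :
    p.eval x = ∑ j, p.eval (v j) * ∏ i ∈ univ.erase j, (x - v i) / (v j - v i) := by
  conv_lhs => rw [Lagrange.eq_interpolate (f := p) hv.injOn (card_univ (α := ι) ▸ hp)]
  simp only [Lagrange.interpolate_apply, eval_finsetSum, eval_mul, eval_C, Lagrange.basis,
    eval_prod, Lagrange.basisDivisor, eval_X, eval_sub]
  refine sum_congr rfl fun j _ => congrArg _ (prod_congr rfl fun i _ => ?_)
  rw [div_eq_inv_mul]

theorem Polynomial.degree_derivative_lt_of_degree_le {R : Type*} [Semiring R] {q : R[X]} {n : ℕ}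
    (hq : q.degree ≤ n) : (derivative q).degree < n := by
  rcases eq_or_ne q 0 with rfl | hq0
  · simp
  · exact (degree_derivative_lt hq0).trans_le hq

theorem Polynomial.degree_comp_lt_of_natDegree_le_one {R : Type*} [Semiring R] {p r : R[X]}
    (hr : r.natDegree ≤ 1) {n : ℕ} (hp : p.degree < n) : (p.comp r).degree < n := by
  rcases eq_or_ne p 0 with rfl | hp0
  · simp
  · have hp_nat : p.natDegree < n := (natDegree_lt_iff_degree_lt hp0).2 hp
    have hcomp : (p.comp r).natDegree ≤ p.natDegree :=
      natDegree_comp_le.trans (by simpa using Nat.mul_le_mul_left p.natDegree hr)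
    exact degree_le_natDegree.trans_lt (mod_cast hcomp.trans_lt hp_nat)

theorem Polynomial.integral_derivative_eval_affine (q : ℝ[X]) (t k b : ℝ) :
    ∫ τ in (0 : ℝ)..b, k * (derivative q).eval (t + τ * k) = q.eval (t + b * k) - q.eval t := by
  have hderiv (τ : ℝ) :
      HasDerivAt (fun τ => q.eval (t + τ * k)) (k * (derivative q).eval (t + τ * k)) τ :=
    ((q.hasDerivAt _).comp τ (((hasDerivAt_id τ).mul_const k).const_add t)).congr_deriv
      (by rw [one_mul, mul_comm]; rfl)
  rw [intervalIntegral.integral_eq_sub_of_hasDerivAt (fun τ _ => hderiv τ)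
    ((by fun_prop : Continuous _).intervalIntegrable _ _)]
  simp

theorem Polynomial.eval_affine_eq_add_sum_integral_lagrange {ι : Type*} [Fintype ι]
    [DecidableEq ι] {c : ι → ℝ} (hc : Function.Injective c) {q : ℝ[X]}
    (hq : q.degree ≤ Fintype.card ι) (t k b : ℝ) :
    q.eval (t + b * k) = q.eval t + k * ∑ j,
      (∫ τ in (0 : ℝ)..b, ∏ i ∈ univ.erase j, (τ - c i) / (c j - c i)) *
        (derivative q).eval (t + c j * k) := by
  set p := (derivative q).comp (C t + X * C k)
  have hp_eval (τ : ℝ) : p.eval τ = (derivative q).eval (t + τ * k) := by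
    simp only [p, eval_comp, eval_add, eval_C, eval_mul, eval_X]
  have hp_deg : p.degree < Fintype.card ι :=
    degree_comp_lt_of_natDegree_le_one (by compute_degree) (degree_derivative_lt_of_degree_le hq)
  have hp_lagrange (τ : ℝ) : k * (derivative q).eval (t + τ * k) = ∑ j,
      k * (derivative q).eval (t + c j * k) * ∏ i ∈ univ.erase j, (τ - c i) / (c j - c i) := by
    simp only [← hp_eval, mul_assoc]
    rw [eval_eq_sum_eval_mul_lagrange hc hp_deg, mul_sum]
  rw [← sub_eq_iff_eq_add', ← integral_derivative_eval_affine, mul_sum,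
    intervalIntegral.integral_congr fun τ _ => hp_lagrange τ,
    intervalIntegral.integral_finsetSum fun j _ =>
      (by fun_prop : Continuous _).intervalIntegrable _ _]
  refine sum_congr rfl fun j _ => ?_
  rw [intervalIntegral.integral_const_mul]
  ring

theorem continuous_collocation_is_runge_kutta_general
    (s : ℕ) (c : Fin s → ℝ) (hc : StrictMono c)
    (d : ℕ) (f : (Fin d → ℝ) → (Fin d → ℝ))
    (tn k : ℝ) (yn : Fin d → ℝ)
    (u : ℝ → Fin d → ℝ)
    (hu_poly : ∀ m : Fin d, ∃ q : Polynomial ℝ,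
      q.degree ≤ (s : ℕ) ∧ ∀ t : ℝ, u t m = q.eval t)
    (hu_init : u tn = yn)
    (hu_colloc : ∀ i : Fin s, ∀ m : Fin d,
      HasDerivAt (fun t => u t m) (f (u (tn + c i * k)) m) (tn + c i * k))
    (ℓ : Fin s → ℝ → ℝ)
    (hℓ : ∀ j x, ℓ j x = ∏ i ∈ Finset.univ.erase j, (x - c i) / (c j - c i))
    (A : Fin s → Fin s → ℝ)
    (hA : ∀ i j, A i j = ∫ τ in (0 : ℝ)..(c i), ℓ j τ)
    (Y : Fin s → Fin d → ℝ)
    (hY : ∀ i, Y i = u (tn + c i * k)) :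
    ∀ i : Fin s, Y i = yn + k • ∑ j, A i j • f (Y j) := by
  intro i
  funext m
  obtain ⟨q, hq_deg, hq⟩ := hu_poly m
  have hq_deriv (j : Fin s) : (derivative q).eval (tn + c j * k) = f (Y j) m := by
    rw [hY j]
    exact ((q.hasDerivAt _).congr_of_eventuallyEq (.of_forall hq)).unique (hu_colloc j m)
  have hstage := eval_affine_eq_add_sum_integral_lagrange hc.injective
    (by simpa using hq_deg) tn k (c i)
  simp only [hq_deriv, ← hq, hu_init] at hstage
  simp only [hY i, hstage, hA, hℓ, Pi.add_apply, Pi.smul_apply, Finset.sum_apply, smul_eq_mul]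

/-- A continuous collocation method is a Runge–Kutta method: if `u` is a componentwise
polynomial of degree at most `s` with `u(tₙ) = yⁿ` and `u'(tₙ + cᵢk) = f(u(tₙ + cᵢk))`
at the collocation times, then the stage values `Yᵢ = u(tₙ + cᵢk)` satisfy the
Runge–Kutta stage equations with `A_{ij} = ∫₀^{cᵢ} ℓⱼ(τ) dτ`, where `ℓⱼ` are the
Lagrange basis polynomials of degree `s - 1` at the nodes. -/
theorem continuous_collocation_is_runge_kutta
    (s : ℕ) (hs : 1 ≤ s) (c : Fin s → ℝ) (hc : StrictMono c)
    (d : ℕ) (hd : 1 ≤ d) (f : (Fin d → ℝ) → (Fin d → ℝ))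
    (tn k : ℝ) (hk : 0 < k) (yn : Fin d → ℝ)
    (u : ℝ → Fin d → ℝ)
    (hu_poly : ∀ m : Fin d, ∃ q : Polynomial ℝ,
      q.degree ≤ (s : ℕ) ∧ ∀ t : ℝ, u t m = q.eval t)
    (hu_init : u tn = yn)
    (hu_colloc : ∀ i : Fin s, ∀ m : Fin d,
      HasDerivAt (fun t => u t m) (f (u (tn + c i * k)) m) (tn + c i * k))
    (ℓ : Fin s → ℝ → ℝ)
    (hℓ : ∀ j x, ℓ j x = ∏ i ∈ Finset.univ.erase j, (x - c i) / (c j - c i))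
    (A : Fin s → Fin s → ℝ)
    (hA : ∀ i j, A i j = ∫ τ in (0 : ℝ)..(c i), ℓ j τ)
    (Y : Fin s → Fin d → ℝ)
    (hY : ∀ i, Y i = u (tn + c i * k)) :
    ∀ i : Fin s, Y i = yn + k • ∑ j, A i j • f (Y j) :=
  continuous_collocation_is_runge_kutta_general s c hc d f tn k yn u hu_poly hu_init hu_colloc ℓ hℓ
    A hA Y hY
end
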